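/- The MacMahon product P(a,b,c) = H(a)H(b)H(c)H(a+b+c)/(H(a+b)H(b+c)H(c+a)) equals the triple product ∏_{i=1}^{a} ∏_{j=1}^{b} ∏_{k=1}^{c} (i+j+k−1)/(i+j+k−2). -/

import Mathlib

/-!
Telescoping in `k` collapses the triple product to `∏_{i<a, j<b} (c+i+j+1)/(i+j+1)`. Grouping the
numerator by `i`, each row `∏_{j<b} (c+i+j+1)` is a quotient of factorials, so the whole product
is a quotient of hyperfactorials: `∏_{i<a} ∏_{j<b} (c+i+j+1) = H(c)H(a+b+c)/(H(b+c)H(c+a))`.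
The same identity at `c = 0` gives the denominator.
-/

/-- The hyperfactorial `H(n) = 0!·1!⋯(n−1)!`. -/
def hyperfac (n : ℕ) : ℕ := ∏ k ∈ Finset.range n, Nat.factorial k

open Finset Nat

lemma hyperfac_zero : hyperfac 0 = 1 :=
  prod_range_zero _

lemma hyperfac_succ (n : ℕ) : hyperfac (n + 1) = hyperfac n * n ! :=
  prod_range_succ _ n

lemma hyperfac_ne_zero (n : ℕ) : hyperfac n ≠ 0 :=
  prod_ne_zero_iff.mpr fun k _ => factorial_ne_zero k

lemma factorial_mul_prod_range_add_succ (n b : ℕ) :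
    n ! * ∏ j ∈ range b, (n + j + 1) = (n + b)! := by
  rw [← factorial_mul_ascFactorial, ascFactorial_eq_prod_range]
  simp only [add_right_comm]

lemma hyperfac_mul_prod_prod_add_succ (a b c : ℕ) :
    hyperfac (b + c) * hyperfac (c + a) * ∏ i ∈ range a, ∏ j ∈ range b, (c + i + j + 1) =
      hyperfac c * hyperfac (a + b + c) := by
  induction a with
  | zero => simp [mul_comm]
  | succ a ih =>
    calc _ = hyperfac (b + c) * hyperfac (c + a) *
          (∏ i ∈ range a, ∏ j ∈ range b, (c + i + j + 1)) *
          ((c + a)! * ∏ j ∈ range b, (c + a + j + 1)) := by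
          rw [prod_range_succ, ← add_assoc c, hyperfac_succ]; ring
      _ = hyperfac c * (hyperfac (a + b + c) * (a + b + c)!) := by
          rw [ih, factorial_mul_prod_range_add_succ, add_right_comm, add_comm c]; ring
      _ = _ := by rw [← hyperfac_succ, add_right_comm a 1, add_right_comm (a + b)]

lemma cast_prod_prod_add_succ (a b c : ℕ) :
    ∏ i ∈ range a, ∏ j ∈ range b, ((c + i + j + 1 : ℕ) : ℚ) =
      ((hyperfac c * hyperfac (a + b + c) : ℕ) : ℚ) /
        ((hyperfac (b + c) * hyperfac (c + a) : ℕ) : ℚ) := by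
  rw [eq_div_iff (by simp [hyperfac_ne_zero]), ← hyperfac_mul_prod_prod_add_succ]
  push_cast
  ring

lemma prod_range_add_succ_div_add {K : Type*} [Field K] [LinearOrder K] [IsStrictOrderedRing K]
    {y : K} (hy : 0 < y) (n : ℕ) :
    ∏ k ∈ range n, (y + k + 1) / (y + k) = (y + n) / y := by
  induction n with
  | zero => simp [hy.ne']
  | succ n ih =>
    have : y + n ≠ 0 := by positivity
    rw [prod_range_succ, ih, cast_succ, ← add_assoc, mul_comm, div_mul_div_cancel₀ this]

lemma prod_Icc_one_eq_prod_range {M : Type*} [CommMonoid M] (f : ℕ → M) (n : ℕ) :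
    ∏ k ∈ Icc 1 n, f k = ∏ k ∈ range n, f (k + 1) := by
  induction n with
  | zero => simp
  | succ n ih => rw [prod_Icc_succ_top (by omega), ih, prod_range_succ]

/-- MacMahon's box formula in product form:
`H(a)H(b)H(c)H(a+b+c)/(H(a+b)H(b+c)H(c+a)) =
 ∏_{i=1}^{a} ∏_{j=1}^{b} ∏_{k=1}^{c} (i+j+k−1)/(i+j+k−2)`. -/
theorem macmahon_product_eq_triple_product (a b c : ℕ) :
    ((hyperfac a * hyperfac b * hyperfac c * hyperfac (a + b + c) : ℕ) : ℚ) /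
        ((hyperfac (a + b) * hyperfac (b + c) * hyperfac (c + a) : ℕ) : ℚ) =
      ∏ i ∈ Finset.Icc 1 a, ∏ j ∈ Finset.Icc 1 b, ∏ k ∈ Finset.Icc 1 c,
        (((i : ℚ) + (j : ℚ) + (k : ℚ) - 1) / ((i : ℚ) + (j : ℚ) + (k : ℚ) - 2)) := by
  have triple_prod_eq : ∏ i ∈ Icc 1 a, ∏ j ∈ Icc 1 b, ∏ k ∈ Icc 1 c,
      (((i : ℚ) + (j : ℚ) + (k : ℚ) - 1) / ((i : ℚ) + (j : ℚ) + (k : ℚ) - 2)) =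
        ∏ i ∈ range a, ∏ j ∈ range b, ((c + i + j + 1 : ℕ) : ℚ) / ((0 + i + j + 1 : ℕ) : ℚ) := by
    rw [prod_Icc_one_eq_prod_range]
    refine prod_congr rfl fun i _ => ?_
    rw [prod_Icc_one_eq_prod_range]
    refine prod_congr rfl fun j _ => ?_
    rw [prod_Icc_one_eq_prod_range]
    convert prod_range_add_succ_div_add (y := (i + j + 1 : ℚ)) (by positivity) c using 1
    all_goals push_cast; ring_nf
  rw [triple_prod_eq]
  simp only [prod_div_distrib]
  rw [cast_prod_prod_add_succ, cast_prod_prod_add_succ,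
    div_div_div_eq, div_eq_div_iff (by simp [hyperfac_ne_zero]) (by simp [hyperfac_ne_zero])]
  simp only [hyperfac_zero, zero_add, add_zero]
  push_cast
  ring
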